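/- arXiv:2408.05322 — 5 statements merged into one kernel-verified Lean document; each statement's English description precedes it below -/
import Mathlib

section
/- (Pushback lemma) Fix $q\in\mathcal{P}_o$, $\alpha\ge 0$, a convex set $A\subseteq\mathcal{P}$, and a convex function $f:A\to\mathbb{R}$. Suppose $p^{opt}$ minimizes $f(p)+\alpha D(p;q)$ over $p\in A$ and $p^{opt}\in\mathcal{P}_o$. Then for all $p\in A$: $f(p^{opt})+\alpha D(p^{opt};q)\le f(p)+\alpha D(p;q)-\alpha D(p;p^{opt})$. -/
/-!
At an interior minimizer `x` of `F = f + α D(·;q)` over `A`, moving towards any `p ∈ A`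
cannot decrease `F` to first order. Since `f` is convex, this gives
`f x ≤ f p + α · ∂_{p - x} D(x;q)`, and the directional derivative of the relative entropy is
given by the three-point identity `∂_{p - x} D(x;q) = D(p;q) - D(p;x) - D(x;q)`.
-/

open Finset Real Set

theorem ConvexOn.le_add_of_isMinOn_add {E : Type*} [AddCommGroup E] [Module ℝ E] {A : Set E}
    {f g : E → ℝ} (hf : ConvexOn ℝ A f) {x y : E} (hx : x ∈ A) (hy : y ∈ A)
    (hmin : IsMinOn (f + g) A x) {g' : ℝ}
    (hg : HasDerivWithinAt (fun t : ℝ => g (x + t • (y - x))) g' (Icc 0 1) 0) :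
    f x ≤ f y + g' := by
  -- By convexity of `f`, `φ t + f x ≥ (f + g) (x + t • (y - x)) ≥ (f + g) x = φ 0 + f x`.
  set φ : ℝ → ℝ := fun t => t * (f y - f x) + g (x + t • (y - x))
  have hφmin : IsMinOn φ (Icc 0 1) 0 := by
    rintro t ⟨ht0, ht1⟩
    have hseg : x + t • (y - x) = (1 - t) • x + t • y := by
      rw [smul_sub, sub_smul, one_smul]; abel
    have hmem : (1 - t) • x + t • y ∈ A := hf.1 hx hy (sub_nonneg.2 ht1) ht0 (by ring)
    have hconv : f ((1 - t) • x + t • y) ≤ (1 - t) * f x + t * f y :=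
      hf.2 hx hy (sub_nonneg.2 ht1) ht0 (by ring)
    have hle : f x + g x ≤ f ((1 - t) • x + t • y) + g ((1 - t) • x + t • y) := hmin hmem
    show φ 0 ≤ φ t
    simp only [φ, zero_mul, zero_smul, add_zero, zero_add]
    rw [hseg]
    linarith
  have hφ : HasDerivWithinAt φ ((f y - f x) + g') (Icc 0 1) 0 := by
    simpa using ((hasDerivWithinAt_id 0 (Icc 0 1)).mul_const (f y - f x)).fun_add hg
  have hcone : (1 : ℝ) ∈ posTangentConeAt (Icc 0 1) 0 :=
    mem_posTangentConeAt_of_segment_subset (by simp [segment_eq_Icc])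
  have := hφmin.localize.hasFDerivWithinAt_nonneg hφ.hasFDerivWithinAt hcone
  rw [ContinuousLinearMap.toSpanSingleton_apply, one_smul] at this
  linarith

/-- For `q i = 0` the summand is the junk value `p i * log 0 = 0`. -/
noncomputable def relEntropy {ι : Type*} [Fintype ι] (p q : ι → ℝ) : ℝ :=
  ∑ i, p i * log (p i / q i)

theorem hasDerivAt_mul_log_div {a c : ℝ} (ha : a ≠ 0) (hc : c ≠ 0) :
    HasDerivAt (fun u => u * log (u / c)) (log (a / c) + 1) a := by
  have hfun : (fun u => u * log (u / c)) = fun u => u * log u - u * log c := by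
    funext u
    rcases eq_or_ne u 0 with rfl | hu
    · simp
    · rw [log_div hu hc]; ring
  rw [hfun, log_div ha hc, sub_add_eq_add_sub]
  exact (hasDerivAt_mul_log ha).fun_sub (hasDerivAt_mul_const (log c))

section relEntropy

variable {ι : Type*} [Fintype ι] {p x q : ι → ℝ}

theorem hasDerivAt_relEntropy_lineMap (hx : ∀ i, x i ≠ 0) (hq : ∀ i, q i ≠ 0) :
    HasDerivAt (fun t : ℝ => relEntropy (x + t • (p - x)) q)
      (∑ i, (p i - x i) * (log (x i / q i) + 1)) 0 := by
  unfold relEntropy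
  refine HasDerivAt.fun_sum fun i _ => ?_
  have hline : HasDerivAt (fun t : ℝ => x i + t * (p i - x i)) (p i - x i) 0 := by
    simpa using ((hasDerivAt_id (0 : ℝ)).mul_const (p i - x i)).const_add (x i)
  have hlog := (hasDerivAt_mul_log_div (hx i) (hq i)).comp_of_eq 0 hline (by simp)
  rwa [mul_comm] at hlog

/-- Bregman's three-point identity for the relative entropy. -/
theorem relEntropy_sub_relEntropy_sub_relEntropy (hx : ∀ i, x i ≠ 0) (hq : ∀ i, q i ≠ 0)
    (hsum : ∑ i, x i = ∑ i, p i) :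
    relEntropy p q - relEntropy p x - relEntropy x q
      = ∑ i, (p i - x i) * (log (x i / q i) + 1) := by
  have hterm : ∀ i, p i * log (p i / q i) - p i * log (p i / x i) - x i * log (x i / q i)
      = (p i - x i) * (log (x i / q i) + 1) - (p i - x i) := by
    intro i
    rcases eq_or_ne (p i) 0 with hp | hp
    · rw [hp, zero_mul, zero_mul]; ring
    · rw [log_div hp (hq i), log_div hp (hx i), log_div (hx i) (hq i)]; ring
  calc relEntropy p q - relEntropy p x - relEntropy x q
      = ∑ i, ((p i - x i) * (log (x i / q i) + 1) - (p i - x i)) := by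
        simp only [relEntropy, ← sum_sub_distrib, hterm]
    _ = _ := by rw [sum_sub_distrib, sum_sub_distrib p x, hsum, sub_self, sub_zero]

end relEntropy

theorem stmt1_general (n : ℕ) (q : Fin n → ℝ) (hq : ∀ i, 0 < q i)
    (α : ℝ) (A : Set (Fin n → ℝ))
    (hA : A ⊆ {p | (∀ i, 0 ≤ p i) ∧ ∑ i, p i = 1})
    (f : (Fin n → ℝ) → ℝ) (hf : ConvexOn ℝ A f)
    (popt : Fin n → ℝ) (hpoptA : popt ∈ A) (hpopt_pos : ∀ i, 0 < popt i)
    (hmin : ∀ p ∈ A, f popt + α * ∑ i, popt i * Real.log (popt i / q i)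
      ≤ f p + α * ∑ i, p i * Real.log (p i / q i)) :
    ∀ p ∈ A, f popt + α * ∑ i, popt i * Real.log (popt i / q i)
      ≤ f p + α * ∑ i, p i * Real.log (p i / q i)
        - α * ∑ i, p i * Real.log (p i / popt i) := by
  intro p hp
  have hpopt_ne : ∀ i, popt i ≠ 0 := fun i => (hpopt_pos i).ne'
  have hq_ne : ∀ i, q i ≠ 0 := fun i => (hq i).ne'
  have hsum : ∑ i, popt i = ∑ i, p i := (hA hpoptA).2.trans (hA hp).2.symm
  have hderiv := (hasDerivAt_relEntropy_lineMap (p := p) hpopt_ne hq_ne).const_mul α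
  rw [← relEntropy_sub_relEntropy_sub_relEntropy hpopt_ne hq_ne hsum] at hderiv
  have hopt := hf.le_add_of_isMinOn_add (g := fun p => α * relEntropy p q) hpoptA hp
    (fun p hp => hmin p hp) hderiv.hasDerivWithinAt
  unfold relEntropy at hopt
  linarith

/-- Pushback lemma for KL-regularized convex minimization over a convex subset
of the probability simplex. -/
theorem stmt1 (n : ℕ) (q : Fin n → ℝ) (hq : ∀ i, 0 < q i) (hq1 : ∑ i, q i = 1)
    (α : ℝ) (hα : 0 ≤ α) (A : Set (Fin n → ℝ))
    (hA : A ⊆ {p | (∀ i, 0 ≤ p i) ∧ ∑ i, p i = 1}) (hAconv : Convex ℝ A)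
    (f : (Fin n → ℝ) → ℝ) (hf : ConvexOn ℝ A f)
    (popt : Fin n → ℝ) (hpoptA : popt ∈ A) (hpopt_pos : ∀ i, 0 < popt i)
    (hmin : ∀ p ∈ A, f popt + α * ∑ i, popt i * Real.log (popt i / q i)
      ≤ f p + α * ∑ i, p i * Real.log (p i / q i)) :
    ∀ p ∈ A, f popt + α * ∑ i, popt i * Real.log (popt i / q i)
      ≤ f p + α * ∑ i, p i * Real.log (p i / q i)
        - α * ∑ i, p i * Real.log (p i / popt i) :=
  stmt1_general n q hq α A hA f hf popt hpoptA hpopt_pos hmin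
end

section
/- Suppose $Q_j(0)=0$ and $Q_j(t+1)=Q_j(t)+\pi(t)^\top Y(t-1)y_j$ for $t\ge 0$, where $Y(-1)=0$ and every entry of each matrix $Y(t)$ has absolute value at most $1$, and $\pi(t)\in\mathcal{P}$ for all $t$. Then for every positive integer $T$: $\left|\frac{1}{T}\sum_{t=0}^{T-1}\pi(t)^\top Y(t)y_j\right|\le \left|\frac{Q_j(T+1)}{T}\right|+\frac{1}{T}\sum_{t=1}^{T}\|\pi(t)-\pi(t-1)\|_1$. -/
/-!
Unrolling the recursion, `Q_j(T+1) = ∑_{t<T} π(t+1)ᵀ Y(t) y_j`, since the `t = 0` term vanishes by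
`Y(-1) = 0`. Hence the average to be bounded differs from `Q_j(T+1)/T` by
`(1/T) ∑_{t<T} (π(t) - π(t+1))ᵀ Y(t) y_j`, and each summand is at most `‖π(t+1) - π(t)‖₁` in
absolute value because the entries of `Y(t)` lie in `[-1, 1]`.
-/

open Finset

theorem sum_Icc_one_eq_sum_range {M : Type*} [AddCommMonoid M] (f : ℕ → M) (T : ℕ) :
    ∑ t ∈ Icc 1 T, f t = ∑ t ∈ range T, f (t + 1) := by
  induction T with
  | zero => simp
  | succ T ih => rw [sum_Icc_succ_top (by omega), ih, sum_range_succ]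

section SummationByParts

variable {ι : Type*} [Fintype ι] (x y : ℕ → ι → ℝ)

theorem abs_sum_sub_mul_le_sum_abs_sub (hy : ∀ t i, |y t i| ≤ 1) (T : ℕ) :
    |∑ t ∈ range T, ∑ i, (x t i - x (t + 1) i) * y t i|
      ≤ ∑ t ∈ range T, ∑ i, |x (t + 1) i - x t i| := by
  refine (abs_sum_le_sum_abs _ _).trans <| sum_le_sum fun t _ ↦
    (abs_sum_le_sum_abs _ _).trans <| sum_le_sum fun i _ ↦ ?_
  rw [abs_mul, abs_sub_comm]
  exact mul_le_of_le_one_right (abs_nonneg _) (hy t i)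

theorem abs_sum_mul_le_abs_sum_succ_mul_add (hy : ∀ t i, |y t i| ≤ 1) (T : ℕ) :
    |∑ t ∈ range T, ∑ i, x t i * y t i|
      ≤ |∑ t ∈ range T, ∑ i, x (t + 1) i * y t i|
        + ∑ t ∈ range T, ∑ i, |x (t + 1) i - x t i| := by
  have hsplit : ∑ t ∈ range T, ∑ i, x t i * y t i
      = ∑ t ∈ range T, ∑ i, x (t + 1) i * y t i
        + ∑ t ∈ range T, ∑ i, (x t i - x (t + 1) i) * y t i := by
    simp only [← sum_add_distrib, ← add_mul, add_sub_cancel]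
  rw [hsplit]
  exact (abs_add_le _ _).trans (add_le_add le_rfl (abs_sum_sub_mul_le_sum_abs_sub x y hy T))

end SummationByParts

theorem stmt3_general (n : ℕ) (j : Fin n) (π : ℕ → Fin n → ℝ)
    (Y : ℤ → Matrix (Fin n) (Fin n) ℝ)
    (hYneg : Y (-1) = 0)
    (hYbdd : ∀ t : ℤ, -1 ≤ t → ∀ i i', |Y t i i'| ≤ 1)
    (Q : ℕ → ℝ) (hQ0 : Q 0 = 0)
    (hQ : ∀ t : ℕ, Q (t + 1) = Q t + ∑ i, π t i * Y ((t : ℤ) - 1) i j) :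
    ∀ T : ℕ, 0 < T →
      |(1 / (T : ℝ)) * ∑ t ∈ Finset.range T, ∑ i, π t i * Y (t : ℤ) i j|
        ≤ |Q (T + 1) / (T : ℝ)|
          + (1 / (T : ℝ)) * ∑ t ∈ Finset.Icc 1 T, ∑ i, |π t i - π (t - 1) i| := by
  intro T hT
  have hQT : Q (T + 1) = ∑ t ∈ range T, ∑ i, π (t + 1) i * Y t i j := by
    rw [eq_sum_range_sub Q, hQ0, zero_add, sum_range_succ']
    simp [hQ, hYneg]
  have hbound := abs_sum_mul_le_abs_sum_succ_mul_add π (fun t i ↦ Y t i j)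
    (fun t i ↦ hYbdd t (by omega) i j) T
  rw [← hQT] at hbound
  have hT' : (0 : ℝ) < T := by exact_mod_cast hT
  calc |(1 / (T : ℝ)) * ∑ t ∈ range T, ∑ i, π t i * Y t i j|
      = |∑ t ∈ range T, ∑ i, π t i * Y t i j| / T := by
        rw [abs_mul, abs_of_pos (one_div_pos.2 hT'), one_div_mul_eq_div]
    _ ≤ (|Q (T + 1)| + ∑ t ∈ range T, ∑ i, |π (t + 1) i - π t i|) / T := by gcongr
    _ = _ := by
        rw [abs_div, abs_of_pos hT', sum_Icc_one_eq_sum_range]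
        simp only [Nat.add_sub_cancel]
        ring

/-- Virtual queue bound for the global-balance queues `Q_j`. -/
theorem stmt3 (n : ℕ) (j : Fin n) (π : ℕ → Fin n → ℝ)
    (hπ : ∀ t, (∀ i, 0 ≤ π t i) ∧ ∑ i, π t i = 1)
    (Y : ℤ → Matrix (Fin n) (Fin n) ℝ)
    (hYneg : Y (-1) = 0)
    (hYbdd : ∀ t : ℤ, -1 ≤ t → ∀ i i', |Y t i i'| ≤ 1)
    (Q : ℕ → ℝ) (hQ0 : Q 0 = 0)
    (hQ : ∀ t : ℕ, Q (t + 1) = Q t + ∑ i, π t i * Y ((t : ℤ) - 1) i j) :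
    ∀ T : ℕ, 0 < T →
      |(1 / (T : ℝ)) * ∑ t ∈ Finset.range T, ∑ i, π t i * Y (t : ℤ) i j|
        ≤ |Q (T + 1) / (T : ℝ)|
          + (1 / (T : ℝ)) * ∑ t ∈ Finset.Icc 1 T, ∑ i, |π t i - π (t - 1) i| :=
  stmt3_general n j π Y hYneg hYbdd Q hQ0 hQ
end

section
/- Suppose $Z_l(0)=0$ and $Z_l(t+1)=\max[Z_l(t)+\pi(t)^\top G(t-1)g_l,0]$ for $t\ge 0$, where $G(-1)=0$, every entry of each matrix $G(t)$ has absolute value at most $c_{max}$, and $\pi(t)\in\mathcal{P}$ for all $t$. Then for every positive integer $T$: $\frac{1}{T}\sum_{t=0}^{T-1}\pi(t)^\top G(t)g_l \le \frac{Z_l(T+1)}{T}+\frac{c_{max}}{T}\sum_{t=1}^{T}\|\pi(t)-\pi(t-1)\|_1$. -/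
open Finset

/-! The drift `π(t)ᵀ G(t-1) g_l` of the queue is at most its increment `Z(t+1) - Z(t)`, so the
drifts telescope to at most `Z(T+1)`. Replacing `π(t+1)` by `π(t)` against the same column
`G(t) g_l` costs at most `c_max ‖π(t+1) - π(t)‖₁` by Hölder's inequality. -/

theorem sum_range_le_sub_of_add_le_succ {a Z : ℕ → ℝ} (h : ∀ t, Z t + a t ≤ Z (t + 1))
    (N : ℕ) : ∑ t ∈ range N, a t ≤ Z N - Z 0 := by
  rw [← sum_range_sub]
  exact sum_le_sum fun t _ => by linarith [h t]

theorem sum_mul_le_sum_mul_add_mul_sum_abs_sub {ι : Type*} [Fintype ι] {p q g : ι → ℝ}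
    {c : ℝ} (hg : ∀ i, |g i| ≤ c) :
    ∑ i, p i * g i ≤ ∑ i, q i * g i + c * ∑ i, |q i - p i| := by
  rw [mul_sum, ← sum_add_distrib]
  refine sum_le_sum fun i _ => ?_
  have : (p i - q i) * g i ≤ c * |q i - p i| :=
    calc (p i - q i) * g i ≤ |p i - q i| * |g i| := (le_abs_self _).trans (abs_mul _ _).le
      _ ≤ c * |q i - p i| := by
        rw [abs_sub_comm, mul_comm]
        exact mul_le_mul_of_nonneg_right (hg i) (abs_nonneg _)
  linarith

theorem sum_Icc_one_eq_sum_range_succ {M : Type*} [AddCommMonoid M] (f : ℕ → ℕ → M)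
    (T : ℕ) : ∑ t ∈ Icc 1 T, f t (t - 1) = ∑ t ∈ range T, f (t + 1) t := by
  rw [← Ico_add_one_right_eq_Icc, sum_Ico_eq_sum_range]
  simp [add_comm]

theorem stmt4_general (n k : ℕ) (l : Fin k) (cmax : ℝ)
    (π : ℕ → Fin n → ℝ)
    (G : ℤ → Matrix (Fin n) (Fin k) ℝ)
    (hGneg : G (-1) = 0)
    (hGbdd : ∀ t : ℤ, -1 ≤ t → ∀ i l', |G t i l'| ≤ cmax)
    (Z : ℕ → ℝ) (hZ0 : Z 0 = 0)
    (hZ : ∀ t : ℕ, Z (t + 1) = max (Z t + ∑ i, π t i * G ((t : ℤ) - 1) i l) 0) :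
    ∀ T : ℕ, 0 < T →
      (1 / (T : ℝ)) * ∑ t ∈ Finset.range T, ∑ i, π t i * G (t : ℤ) i l
        ≤ Z (T + 1) / (T : ℝ)
          + (cmax / (T : ℝ)) * ∑ t ∈ Finset.Icc 1 T, ∑ i, |π t i - π (t - 1) i| := by
  intro T _
  set drift : ℕ → ℝ := fun t => ∑ i, π t i * G ((t : ℤ) - 1) i l
  have hdrift : ∑ t ∈ range T, drift (t + 1) ≤ Z (T + 1) := by
    have h := sum_range_le_sub_of_add_le_succ (fun t => (hZ t).ge.trans' (le_max_left _ _)) (T + 1)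
    simpa [sum_range_succ', drift, hGneg, hZ0] using h
  have hswitch : ∀ t : ℕ, ∑ i, π t i * G t i l
      ≤ drift (t + 1) + cmax * ∑ i, |π (t + 1) i - π t i| := fun t => by
    simpa [drift] using
      sum_mul_le_sum_mul_add_mul_sum_abs_sub (p := π t) (q := π (t + 1))
        fun i => hGbdd t (by omega) i l
  have hmain : ∑ t ∈ range T, ∑ i, π t i * G t i l
      ≤ Z (T + 1) + cmax * ∑ t ∈ range T, ∑ i, |π (t + 1) i - π t i| := by
    grw [sum_le_sum fun t _ => hswitch t, sum_add_distrib, ← mul_sum, hdrift]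
  rw [sum_Icc_one_eq_sum_range_succ (fun t s => ∑ i, |π t i - π s i|)]
  calc _ ≤ 1 / (T : ℝ) * (Z (T + 1) + cmax * ∑ t ∈ range T, ∑ i, |π (t + 1) i - π t i|) := by
        gcongr
    _ = _ := by ring

/-- Virtual queue bound for the cost queues `Z_l`. -/
theorem stmt4 (n k : ℕ) (l : Fin k) (cmax : ℝ) (hcmax : 0 < cmax)
    (π : ℕ → Fin n → ℝ)
    (hπ : ∀ t, (∀ i, 0 ≤ π t i) ∧ ∑ i, π t i = 1)
    (G : ℤ → Matrix (Fin n) (Fin k) ℝ)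
    (hGneg : G (-1) = 0)
    (hGbdd : ∀ t : ℤ, -1 ≤ t → ∀ i l', |G t i l'| ≤ cmax)
    (Z : ℕ → ℝ) (hZ0 : Z 0 = 0)
    (hZ : ∀ t : ℕ, Z (t + 1) = max (Z t + ∑ i, π t i * G ((t : ℤ) - 1) i l) 0) :
    ∀ T : ℕ, 0 < T →
      (1 / (T : ℝ)) * ∑ t ∈ Finset.range T, ∑ i, π t i * G (t : ℤ) i l
        ≤ Z (T + 1) / (T : ℝ)
          + (cmax / (T : ℝ)) * ∑ t ∈ Finset.Icc 1 T, ∑ i, |π t i - π (t - 1) i| :=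
  stmt4_general n k l cmax π G hGneg hGbdd Z hZ0 hZ
end

section
/- (Representation of a random element, sure version) Let $(\Omega,\mathcal{F},P)$ be a probability space, $X:\Omega\to D_X$ a random element in a standard Borel space $D_X$, $S:\Omega\to D_S$ a random element in an arbitrary measurable space, and $V\sim\mathrm{Unif}[0,1]$ independent of $(X,S)$. Then there exist a measurable function $f:D_S\times[0,1]\to D_X$ and a random variable $U\sim\mathrm{Unif}[0,1]$ independent of $S$ such that $X=f(S,U)$ surely (for every $\omega\in\Omega$, not just almost surely), and $U$ is a measurable function of $(X,S,V)$. -/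
/-
For real `X`, let `F_s` be the distribution function of the conditional law of `X` given `S = s`.
The conditional distributional transform `U₀ = F_S(X-) + V (F_S(X) - F_S(X-))` spreads every atom
of `F_S` uniformly over its jump, so `U₀` is uniform and independent of `S`; and since `U₀` almost
surely avoids the countably many values at which `F_S` has a plateau, the quantile function
recovers `X = F_S⁻¹(U₀)` almost surely. On the remaining null set, `U₀` is replaced by `-exp X`,
which lies in the null set `(-∞, 0)` and from which `X` is read off directly. A standard Borel
space embeds measurably into `ℝ`, which reduces the theorem to real `X`.
-/

open MeasureTheory ProbabilityTheory Set Filter Function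

noncomputable section

local notation "unif" => (volume.restrict (Icc (0 : ℝ) 1) : Measure ℝ)

instance : IsProbabilityMeasure unif := ⟨by simp⟩

lemma unif_eq_one_of_Icc_subset {s : Set ℝ} (h : Icc 0 1 ⊆ s) : unif s = 1 := by
  rw [Measure.restrict_apply' measurableSet_Icc, inter_eq_right.2 h]; simp

lemma unif_eq_zero_of_disjoint {s : Set ℝ} (h : Disjoint s (Icc 0 1)) : unif s = 0 := by
  rw [Measure.restrict_apply' measurableSet_Icc, h.inter_eq, measure_empty]

lemma unif_Iio {t : ℝ} (ht : t ≤ 1) : unif (Iio t) = ENNReal.ofReal t := by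
  rw [Measure.restrict_apply' measurableSet_Icc,
    show Iio t ∩ Icc 0 1 = Ico 0 t by ext; simp; grind, Real.volume_Ico, sub_zero]

lemma unif_setOf_add_mul_lt_mul {a d t : ℝ} (hd : 0 ≤ d) (hat : a ≤ t) (hta : t ≤ a + d) :
    unif {v | a + v * d < t} * ENNReal.ofReal d = ENNReal.ofReal (t - a) := by
  rcases hd.eq_or_lt with rfl | hd
  · rw [show t = a by linarith]; simp
  have hset : {v | a + v * d < t} = Iio ((t - a) / d) := by
    ext v; simp only [mem_ofPred_eq, mem_Iio, lt_div_iff₀ hd]; constructor <;> intro <;> linarith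
  have h0 : 0 ≤ (t - a) / d := div_nonneg (by linarith) hd.le
  have h1 : (t - a) / d ≤ 1 := (div_le_one hd).2 (by linarith)
  rw [hset, unif_Iio h1, ← ENNReal.ofReal_mul h0, div_mul_cancel₀ _ hd.ne']

lemma ext_of_measure_Iio_of_dense {μ ν : Measure ℝ} [IsProbabilityMeasure μ]
    [IsProbabilityMeasure ν] {s : Set ℝ} (hs : Dense s) (h : ∀ t ∈ s, μ (Iio t) = ν (Iio t)) :
    μ = ν := by
  refine ext_of_generate_finite _
    (BorelSpace.measurable_eq.trans hs.borel_eq_generateFrom_Ico_mem) (isPiSystem_Ico_mem s s) ?_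
    (by simp)
  rintro _ ⟨l, hl, u, hu, hlu, rfl⟩
  have hIco : Ico l u = Iio u \ Iio l := by ext; simp
  rw [hIco, measure_sdiff (Iio_subset_Iio hlu.le) measurableSet_Iio.nullMeasurableSet,
    measure_sdiff (Iio_subset_Iio hlu.le) measurableSet_Iio.nullMeasurableSet, h l hl, h u hu]
  all_goals exact measure_ne_top _ _

/-- Spreads each atom of `μ` uniformly over the jump of its distribution function. -/
def distribTransform (μ : Measure ℝ) (p : ℝ × ℝ) : ℝ :=
  μ.real (Iio p.1) + p.2 * μ.real {p.1}

def quantile (μ : Measure ℝ) (u : ℝ) : ℝ :=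
  sInf {y | u ≤ cdf μ y}

lemma quantile_le_iff {μ : Measure ℝ} {u : ℝ} (hu : u ∈ Ioo (0 : ℝ) 1) (t : ℝ) :
    quantile μ u ≤ t ↔ u ≤ cdf μ t := by
  have hne : {y | u ≤ cdf μ y}.Nonempty :=
    ((tendsto_cdf_atTop μ).eventually (eventually_gt_nhds hu.2)).exists.imp fun _ h => h.le
  have hbdd : BddBelow {y | u ≤ cdf μ y} := by
    obtain ⟨y₀, hy₀⟩ :=
      eventually_atBot.1 ((tendsto_cdf_atBot μ).eventually (eventually_lt_nhds hu.1))
    exact ⟨y₀, fun y hy => le_of_not_gt fun hlt => (hy₀ y hlt.le).not_ge hy⟩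
  refine ⟨fun h => ?_, fun h => csInf_le hbdd h⟩
  refine ge_of_tendsto (((cdf μ).right_continuous t).mono_left
    (nhdsWithin_mono _ Ioi_subset_Ici_self)) ?_
  filter_upwards [self_mem_nhdsWithin] with z hz
  obtain ⟨y, hy, hyz⟩ := exists_lt_of_csInf_lt hne (h.trans_lt hz)
  exact hy.trans (monotone_cdf μ hyz.le)

section DistribTransform

variable (μ : Measure ℝ) [IsProbabilityMeasure μ]

lemma measureReal_Iio_eq_leftLim_cdf (y : ℝ) : μ.real (Iio y) = leftLim (cdf μ) y := by
  have h := (cdf μ).measure_Iio (tendsto_cdf_atBot μ) y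
  rw [measure_cdf, sub_zero] at h
  rw [measureReal_def, h,
    ENNReal.toReal_ofReal ((cdf_nonneg μ (y - 1)).trans ((monotone_cdf μ).le_leftLim (by simp)))]

lemma measureReal_Iio_add_singleton (y : ℝ) : μ.real (Iio y) + μ.real {y} = cdf μ y := by
  rw [cdf_eq_real, ← measureReal_union (by simp) (measurableSet_singleton y), Iio_union_right]

lemma measurable_distribTransform : Measurable (distribTransform μ) := by
  have hIio : Measurable fun y => μ.real (Iio y) :=
    Monotone.measurable fun _ _ h => measureReal_mono (Iio_subset_Iio h)
  have hsing : Measurable fun y => μ.real {y} := by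
    have h : (fun y => μ.real {y}) = fun y => cdf μ y - μ.real (Iio y) :=
      funext fun y => by rw [← measureReal_Iio_add_singleton]; ring
    exact h ▸ (monotone_cdf μ).measurable.sub hIio
  exact (hIio.comp measurable_fst).add (measurable_snd.mul (hsing.comp measurable_fst))

variable {μ}

lemma distribTransform_mem_Icc {y v : ℝ} (hv : v ∈ Icc (0 : ℝ) 1) :
    distribTransform μ (y, v) ∈ Icc (μ.real (Iio y)) (cdf μ y) := by
  rw [← measureReal_Iio_add_singleton, distribTransform]
  have := measureReal_nonneg (μ := μ) (s := {y})
  constructor <;> nlinarith [hv.1, hv.2]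

lemma prod_unif_setOf_distribTransform_lt {t : ℝ} (ht : t ≠ 1) :
    (μ.prod unif) {p | distribTransform μ p < t} = unif (Iio t) := by
  rw [Measure.prod_apply (measurableSet_lt (measurable_distribTransform μ) measurable_const)]
  simp only [preimage_ofPred_eq]
  rcases le_or_gt t 0 with ht0 | ht0
  · have hslice (y : ℝ) : unif {v | distribTransform μ (y, v) < t} = 0 :=
      unif_eq_zero_of_disjoint <| disjoint_left.2 fun v hv hv' =>
        (hv.trans_le ht0).not_ge (measureReal_nonneg.trans (distribTransform_mem_Icc hv').1)
    simp [hslice, unif_Iio (ht0.trans zero_le_one), ENNReal.ofReal_of_nonpos ht0]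
  rcases ht.lt_or_gt with ht1 | ht1
  swap
  · have hslice (y : ℝ) : unif {v | distribTransform μ (y, v) < t} = 1 :=
      unif_eq_one_of_Icc_subset fun v hv =>
        ((distribTransform_mem_Icc hv).2.trans (cdf_le_one μ y)).trans_lt ht1
    simp [hslice, unif_eq_one_of_Icc_subset fun v hv => mem_Iio.2 (hv.2.trans_lt ht1)]
  have hu : t ∈ Ioo (0 : ℝ) 1 := ⟨ht0, ht1⟩
  set ys := quantile μ t
  have hlt (y : ℝ) : y < ys ↔ cdf μ y < t := by rw [← not_le, ← not_le, quantile_le_iff hu]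
  have hys : t ≤ cdf μ ys := (quantile_le_iff hu ys).1 le_rfl
  have hIio : μ.real (Iio ys) ≤ t := by
    rw [measureReal_Iio_eq_leftLim_cdf]
    refine le_of_tendsto ((monotone_cdf μ).tendsto_leftLim ys) ?_
    filter_upwards [self_mem_nhdsWithin] with y hy using ((hlt y).1 hy).le
  have hslice (y : ℝ) : unif {v | distribTransform μ (y, v) < t} =
      (Iio ys).indicator 1 y +
        ({ys} : Set ℝ).indicator (fun _ => unif {v | μ.real (Iio ys) + v * μ.real {ys} < t}) y :=
      by
    rcases lt_trichotomy y ys with hy | rfl | hy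
    · rw [indicator_of_mem (show y ∈ Iio ys from hy),
        indicator_of_notMem (show y ∉ ({ys} : Set ℝ) from hy.ne), Pi.one_apply, add_zero]
      exact unif_eq_one_of_Icc_subset fun v hv =>
        (distribTransform_mem_Icc hv).2.trans_lt ((hlt y).1 hy)
    · rw [indicator_of_notMem (show ys ∉ Iio ys from lt_irrefl ys),
        indicator_of_mem (mem_singleton ys), zero_add]
      rfl
    · rw [indicator_of_notMem (show y ∉ Iio ys from hy.not_gt),
        indicator_of_notMem (show y ∉ ({ys} : Set ℝ) from hy.ne'), add_zero]
      refine unif_eq_zero_of_disjoint <| disjoint_left.2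
        fun v (hv : distribTransform μ (y, v) < t) hv' => hv.not_ge ?_
      calc t ≤ cdf μ ys := hys
        _ = μ.real (Iic ys) := cdf_eq_real μ ys
        _ ≤ μ.real (Iio y) := measureReal_mono (Iic_subset_Iio.2 hy)
        _ ≤ distribTransform μ (y, v) := (distribTransform_mem_Icc hv').1
  simp_rw [hslice]
  rw [lintegral_add_left (measurable_one.indicator measurableSet_Iio),
    lintegral_indicator_one measurableSet_Iio,
    lintegral_indicator_const (measurableSet_singleton _), ← ofReal_measureReal (μ := μ),
    ← ofReal_measureReal (μ := μ), unif_setOf_add_mul_lt_mul measureReal_nonneg hIio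
      (by rw [measureReal_Iio_add_singleton]; exact hys),
    ← ENNReal.ofReal_add measureReal_nonneg (by linarith), add_sub_cancel, unif_Iio ht1.le]

lemma map_distribTransform : (μ.prod unif).map (distribTransform μ) = unif := by
  have := Measure.isProbabilityMeasure_map (μ := μ.prod unif)
    (measurable_distribTransform μ).aemeasurable
  refine ext_of_measure_Iio_of_dense (dense_compl_singleton 1) fun t ht => ?_
  rw [Measure.map_apply (measurable_distribTransform μ) measurableSet_Iio]
  exact prod_unif_setOf_distribTransform_lt ht

lemma ae_quantile_distribTransform : ∀ᵐ p ∂μ.prod unif,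
    distribTransform μ p ∈ Ioo (0 : ℝ) 1 ∧ quantile μ (distribTransform μ p) = p.1 := by
  -- A plateau of `cdf μ` just left of `y` would force the transform to equal some `cdf μ q`,
  -- `q` rational; these countably many values are null for its (uniform) law.
  set C : Set ℝ := {0, 1} ∪ range fun q : ℚ => cdf μ q
  have hC : ∀ᵐ u ∂unif, u ∈ Icc (0 : ℝ) 1 ∧ u ∉ C :=
    (ae_restrict_mem measurableSet_Icc).and <| measure_eq_zero_iff_ae_notMem.1 <|
      (((countable_singleton 1).insert 0).union (countable_range _)).measure_zero _
  have hτ : ∀ᵐ p ∂μ.prod unif,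
      distribTransform μ p ∈ Icc (0 : ℝ) 1 ∧ distribTransform μ p ∉ C :=
    ae_of_ae_map (measurable_distribTransform μ).aemeasurable (by rwa [map_distribTransform])
  have hv : ∀ᵐ p ∂μ.prod unif, p.2 ∈ Icc (0 : ℝ) 1 :=
    Measure.quasiMeasurePreserving_snd.ae (ae_restrict_mem measurableSet_Icc)
  filter_upwards [hτ, hv] with ⟨y, v⟩ ⟨⟨hτ0, hτ1⟩, hτC⟩ hv
  have hu : distribTransform μ (y, v) ∈ Ioo (0 : ℝ) 1 :=
    ⟨hτ0.lt_of_ne fun h => hτC (by simp [C, h]), hτ1.lt_of_ne fun h => hτC (by simp [C, h])⟩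
  refine ⟨hu, le_antisymm ((quantile_le_iff hu y).2 (distribTransform_mem_Icc hv).2)
    (le_of_not_gt fun hlt => ?_)⟩
  obtain ⟨q, hq, hqy⟩ := exists_rat_btwn hlt
  refine hτC (Or.inr ⟨q, le_antisymm ?_ ((quantile_le_iff hu q).1 hq.le)⟩)
  calc cdf μ q = μ.real (Iic (q : ℝ)) := cdf_eq_real μ q
    _ ≤ μ.real (Iio y) := measureReal_mono (Iic_subset_Iio.2 hqy)
    _ ≤ distribTransform μ (y, v) := (distribTransform_mem_Icc hv).1

end DistribTransform

section Kernel

variable {α : Type*} [MeasurableSpace α] (κ : Kernel α ℝ) [IsMarkovKernel κ]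

def condDistribTransform (q : (α × ℝ) × ℝ) : ℝ :=
  distribTransform (κ q.1.1) (q.1.2, q.2)

/-- The quantile of the fibre `κ a`, cut off to `0` outside `(0, 1)`, where the junk values of
`sInf` would spoil joint measurability. -/
def condQuantile (p : α × ℝ) : ℝ :=
  if p.2 ∈ Ioo (0 : ℝ) 1 then quantile (κ p.1) p.2 else 0

lemma measurable_condDistribTransform : Measurable (condDistribTransform κ) := by
  have hfibre {t : Set ((α × ℝ) × ℝ)} (ht : MeasurableSet t) :
      Measurable fun p : α × ℝ => (κ p.1).real (Prod.mk p ⁻¹' t) :=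
    ((κ.comap Prod.fst measurable_fst).measurable_kernel_prodMk_left ht).ennreal_toReal
  have hIio : Measurable fun p : α × ℝ => (κ p.1).real (Iio p.2) :=
    hfibre (measurableSet_lt measurable_snd (measurable_snd.comp measurable_fst))
  have hsing : Measurable fun p : α × ℝ => (κ p.1).real {p.2} :=
    hfibre (measurableSet_eq_fun measurable_snd (measurable_snd.comp measurable_fst))
  exact (hIio.comp measurable_fst).add (measurable_snd.mul (hsing.comp measurable_fst))

lemma measurable_condQuantile : Measurable (condQuantile κ) := by
  refine measurable_of_Iic fun t => ?_
  have hcdf : Measurable fun p : α × ℝ => (κ p.1).real (Iic t) :=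
    ((κ.measurable_coe measurableSet_Iic).comp measurable_fst).ennreal_toReal
  have hIoo : MeasurableSet {p : α × ℝ | p.2 ∈ Ioo (0 : ℝ) 1} := measurable_snd measurableSet_Ioo
  have h : condQuantile κ ⁻¹' Iic t =
      {p | p.2 ∈ Ioo (0 : ℝ) 1} ∩ {p | p.2 ≤ (κ p.1).real (Iic t)} ∪
        {p | p.2 ∈ Ioo (0 : ℝ) 1}ᶜ ∩ {_p | 0 ≤ t} := by
    ext p
    simp only [condQuantile, mem_preimage, mem_Iic, mem_union, mem_inter_iff, mem_ofPred_eq,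
      mem_compl_iff]
    by_cases hp : p.2 ∈ Ioo (0 : ℝ) 1
    · simp only [if_pos hp, quantile_le_iff hp, cdf_eq_real]; tauto
    · simp only [if_neg hp]; tauto
  rw [h]
  exact (hIoo.inter (measurableSet_le measurable_snd hcdf)).union (hIoo.compl.inter (.const _))

variable {κ}

lemma map_prod_condDistribTransform (μ : Measure α) [IsProbabilityMeasure μ] :
    ((μ ⊗ₘ κ).prod unif).map (fun q => (q.1.1, condDistribTransform κ q)) = μ.prod unif := by
  set T := fun q : (α × ℝ) × ℝ => (q.1.1, condDistribTransform κ q)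
  have hT : Measurable T :=
    (measurable_fst.comp measurable_fst).prodMk (measurable_condDistribTransform κ)
  refine (Measure.prod_eq fun A B hA hB => ?_).symm
  have hAB := hT (hA.prod hB)
  rw [Measure.map_apply hT (hA.prod hB), Measure.prod_apply hAB,
    Measure.lintegral_compProd (measurable_measure_prodMk_left hAB)]
  have hfibre (a : α) : ∫⁻ y, unif (Prod.mk (a, y) ⁻¹' (T ⁻¹' A ×ˢ B)) ∂κ a =
      A.indicator (fun _ => unif B) a := by
    by_cases ha : a ∈ A
    · have hslice (y : ℝ) : Prod.mk (a, y) ⁻¹' (T ⁻¹' A ×ˢ B) =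
          Prod.mk y ⁻¹' (distribTransform (κ a) ⁻¹' B) := by
        ext v; simp [T, condDistribTransform, ha]
      simp_rw [hslice, indicator_of_mem ha]
      rw [← Measure.prod_apply (measurable_distribTransform _ hB),
        ← Measure.map_apply (measurable_distribTransform _) hB, map_distribTransform]
    · have hslice (y : ℝ) : Prod.mk (a, y) ⁻¹' (T ⁻¹' A ×ˢ B) = ∅ := by
        ext v; simp [T, ha]
      simp [hslice, ha]
  simp_rw [hfibre]
  rw [lintegral_indicator_const hA, mul_comm]

lemma ae_condQuantile_condDistribTransform (μ : Measure α) [SFinite μ] :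
    ∀ᵐ q ∂(μ ⊗ₘ κ).prod unif, condQuantile κ (q.1.1, condDistribTransform κ q) = q.1.2 := by
  have hbad : MeasurableSet {q : (α × ℝ) × ℝ |
      ¬ condQuantile κ (q.1.1, condDistribTransform κ q) = q.1.2} :=
    (measurableSet_eq_fun ((measurable_condQuantile κ).comp
      ((measurable_fst.comp measurable_fst).prodMk (measurable_condDistribTransform κ)))
      (measurable_snd.comp measurable_fst)).compl
  rw [ae_iff, Measure.prod_apply hbad,
    Measure.lintegral_compProd (measurable_measure_prodMk_left hbad)]
  have hfibre (a : α) : ∫⁻ y, unif (Prod.mk (a, y) ⁻¹' {q : (α × ℝ) × ℝ |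
      ¬ condQuantile κ (q.1.1, condDistribTransform κ q) = q.1.2}) ∂κ a = 0 := by
    have hbad_a : MeasurableSet {p : ℝ × ℝ |
        ¬ condQuantile κ (a, distribTransform (κ a) p) = p.1} :=
      hbad.preimage ((measurable_const.prodMk measurable_fst).prodMk measurable_snd)
    have hgood := ae_iff.1 (ae_quantile_distribTransform (μ := κ a))
    refine (Measure.prod_apply hbad_a).symm.trans (measure_mono_null ?_ hgood)
    intro p hp hp'
    exact hp (by simp only [condQuantile, if_pos hp'.1, hp'.2])
  simp only [hfibre, lintegral_zero]

end Kernel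

/-- An almost sure decoding `y = g (s, u)` with `u ≥ 0` becomes a sure one once `u` is redefined,
off the good set, as `-exp y`: this stores `y` in `(-∞, 0)`, where `g` is not consulted. -/
lemma exists_sure_decoding {DS γ : Type*} [MeasurableSpace DS] [MeasurableSpace γ]
    {g : DS × ℝ → ℝ} (hg : Measurable g) {h₀ : ℝ × DS × γ → ℝ} (hh₀ : Measurable h₀) :
    ∃ (f : DS × ℝ → ℝ) (h : ℝ × DS × γ → ℝ), Measurable f ∧ Measurable h ∧
      (∀ y s v, y = f (s, h (y, s, v))) ∧
      ∀ y s v, y = g (s, h₀ (y, s, v)) → 0 ≤ h₀ (y, s, v) → h (y, s, v) = h₀ (y, s, v) := by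
  classical
  let good : Set (ℝ × DS × γ) := {x | x.1 = g (x.2.1, h₀ x) ∧ 0 ≤ h₀ x}
  have hgood : MeasurableSet good :=
    (measurableSet_eq_fun measurable_fst (hg.comp ((measurable_fst.comp measurable_snd).prodMk
      hh₀))).inter (measurableSet_le measurable_const hh₀)
  refine ⟨fun p => if p.2 < 0 then Real.log (-p.2) else g p,
    fun x => if x ∈ good then h₀ x else -Real.exp x.1, ?_, ?_, fun y s v => ?_,
    fun y s v hy h0 => if_pos ⟨hy, h0⟩⟩
  · exact Measurable.ite (measurableSet_lt measurable_snd measurable_const)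
      (Real.measurable_log.comp measurable_snd.neg) hg
  · exact Measurable.ite hgood hh₀ (Real.measurable_exp.comp measurable_fst).neg
  by_cases hx : (y, s, v) ∈ good
  · simp [hx, not_lt.2 hx.2, ← hx.1]
  · simp [hx, Real.exp_pos]

lemma map_eq_and_indepFun_of_map_prod_eq_prod {Ω α β : Type*} [MeasurableSpace Ω]
    [MeasurableSpace α] [MeasurableSpace β] {P : Measure Ω} [IsProbabilityMeasure P]
    {A : Ω → α} {B : Ω → β} (hA : Measurable A) (hB : Measurable B) {ν : Measure β}
    [IsProbabilityMeasure ν] (h : P.map (fun ω => (A ω, B ω)) = (P.map A).prod ν) :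
    P.map B = ν ∧ IndepFun B A P := by
  have : IsProbabilityMeasure (P.map A) := Measure.isProbabilityMeasure_map hA.aemeasurable
  have hlaw : P.map B = ν := by rw [← Measure.snd_map_prodMk hA, h, Measure.snd_prod]
  refine ⟨hlaw, IndepFun.symm ?_⟩
  rw [indepFun_iff_map_prod_eq_prod_map_map hA.aemeasurable hB.aemeasurable, h, hlaw]

section RandomVariables

variable {Ω DS : Type*} [MeasurableSpace Ω] [MeasurableSpace DS] {P : Measure Ω}
  [IsProbabilityMeasure P] {S : Ω → DS} {Y V : Ω → ℝ}

lemma map_eq_prod_compProd_condDistrib (hS : Measurable S) (hY : Measurable Y)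
    (hV : Measurable V) (hVunif : P.map V = unif) (hindep : IndepFun (fun ω => (S ω, Y ω)) V P) :
    P.map (fun ω => ((S ω, Y ω), V ω)) = ((P.map S) ⊗ₘ condDistrib Y S P).prod unif := by
  rw [(indepFun_iff_map_prod_eq_prod_map_map (hS.prodMk hY).aemeasurable hV.aemeasurable).1
    hindep, hVunif, compProd_map_condDistrib hY.aemeasurable]

/-- Kallenberg's almost sure transfer, for a real random variable. -/
lemma exists_ae_representation (hS : Measurable S) (hY : Measurable Y) (hV : Measurable V)
    (hVunif : P.map V = unif) (hindep : IndepFun (fun ω => (S ω, Y ω)) V P) :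
    ∃ (g : DS × ℝ → ℝ) (h₀ : ℝ × DS × ℝ → ℝ), Measurable g ∧ Measurable h₀ ∧
      P.map (fun ω => h₀ (Y ω, S ω, V ω)) = unif ∧ IndepFun (fun ω => h₀ (Y ω, S ω, V ω)) S P ∧
      ∀ᵐ ω ∂P, Y ω = g (S ω, h₀ (Y ω, S ω, V ω)) := by
  set κ := condDistrib Y S P
  have : IsProbabilityMeasure (P.map S) := Measure.isProbabilityMeasure_map hS.aemeasurable
  have hSYV : Measurable fun ω => ((S ω, Y ω), V ω) := (hS.prodMk hY).prodMk hV
  have hlaw := map_eq_prod_compProd_condDistrib hS hY hV hVunif hindep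
  have hT : Measurable fun q : (DS × ℝ) × ℝ => (q.1.1, condDistribTransform κ q) :=
    (measurable_fst.comp measurable_fst).prodMk (measurable_condDistribTransform κ)
  have hjoint : P.map (fun ω => (S ω, condDistribTransform κ ((S ω, Y ω), V ω))) =
      (P.map S).prod unif := by
    rw [← map_prod_condDistribTransform (κ := κ) (P.map S), ← hlaw, Measure.map_map hT hSYV]
    rfl
  obtain ⟨hU₀, hU₀S⟩ := map_eq_and_indepFun_of_map_prod_eq_prod hS
    ((measurable_condDistribTransform κ).comp hSYV) hjoint
  refine ⟨condQuantile κ, fun x => condDistribTransform κ ((x.2.1, x.1), x.2.2),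
    measurable_condQuantile κ, (measurable_condDistribTransform κ).comp (by fun_prop), hU₀, hU₀S,
    ?_⟩
  have hrep := ae_condQuantile_condDistribTransform (κ := κ) (P.map S)
  rw [← hlaw] at hrep
  exact (ae_of_ae_map hSYV.aemeasurable hrep).mono fun ω h => h.symm

lemma exists_sure_representation_real (hS : Measurable S) (hY : Measurable Y)
    (hV : Measurable V) (hVunif : P.map V = unif) (hindep : IndepFun (fun ω => (S ω, Y ω)) V P) :
    ∃ (f : DS × ℝ → ℝ) (U : Ω → ℝ) (h : ℝ × DS × ℝ → ℝ), Measurable f ∧ Measurable h ∧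
      P.map U = unif ∧ IndepFun U S P ∧ (∀ ω, Y ω = f (S ω, U ω)) ∧
      ∀ ω, U ω = h (Y ω, S ω, V ω) := by
  obtain ⟨g, h₀, hg, hh₀, hlaw, hindep₀, hrep⟩ := exists_ae_representation hS hY hV hVunif hindep
  obtain ⟨f, h, hf, hh, hsure, hagree⟩ := exists_sure_decoding hg hh₀
  have hnonneg : ∀ᵐ ω ∂P, 0 ≤ h₀ (Y ω, S ω, V ω) :=
    ae_of_ae_map (hh₀.comp (hY.prodMk (hS.prodMk hV))).aemeasurable
      (hlaw ▸ (ae_restrict_mem measurableSet_Icc).mono fun _ hu => hu.1)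
  have hae : (fun ω => h (Y ω, S ω, V ω)) =ᵐ[P] fun ω => h₀ (Y ω, S ω, V ω) := by
    filter_upwards [hrep, hnonneg] with ω hω hω' using hagree _ _ _ hω hω'
  exact ⟨f, fun ω => h (Y ω, S ω, V ω), h, hf, hh, (Measure.map_congr hae).trans hlaw,
    hindep₀.congr hae.symm .rfl, fun ω => hsure _ _ _, fun ω => rfl⟩

end RandomVariables

end

/-- Sure representation of a random element taking values in a standard Borel
space: `X = f(S, U)` for every outcome, with `U` uniform on `[0,1]`, independent
of `S`, and measurable in `(X, S, V)`. -/
theorem stmt15 {Ω DX DS : Type*} [MeasurableSpace Ω]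
    [MeasurableSpace DX] [StandardBorelSpace DX] [MeasurableSpace DS]
    (P : Measure Ω) [IsProbabilityMeasure P]
    (X : Ω → DX) (hX : Measurable X) (S : Ω → DS) (hS : Measurable S)
    (V : Ω → ℝ) (hV : Measurable V)
    (hVunif : Measure.map V P = volume.restrict (Set.Icc (0 : ℝ) 1))
    (hindep : IndepFun (fun ω => (X ω, S ω)) V P) :
    ∃ (f : DS × ℝ → DX) (U : Ω → ℝ) (h : DX × DS × ℝ → ℝ),
      Measurable f ∧ Measurable h ∧
      Measure.map U P = volume.restrict (Set.Icc (0 : ℝ) 1) ∧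
      IndepFun U S P ∧
      (∀ ω, X ω = f (S ω, U ω)) ∧
      (∀ ω, U ω = h (X ω, S ω, V ω)) := by
  have : Nonempty Ω := (isEmpty_or_nonempty Ω).resolve_left fun _ =>
    IsProbabilityMeasure.ne_zero P (Measure.eq_zero_of_isEmpty P)
  obtain ⟨φ, hφ⟩ := exists_measurableEmbedding_real DX
  obtain ⟨r, hr, hrφ⟩ :=
    hφ.exists_measurable_extend measurable_id fun _ => ⟨X (Classical.arbitrary Ω)⟩
  obtain ⟨f, U, h, hf, hh, hU, hUS, hXf, hUh⟩ := exists_sure_representation_real hS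
    (hφ.measurable.comp hX) hV hVunif
    (hindep.comp (measurable_snd.prodMk (hφ.measurable.comp measurable_fst)) measurable_id)
  refine ⟨r ∘ f, U, fun x => h (φ x.1, x.2), hr.comp hf,
    hh.comp ((hφ.measurable.comp measurable_fst).prodMk measurable_snd), hU, hUS, fun ω => ?_, hUh⟩
  rw [comp_apply, ← hXf ω]
  exact (congrFun hrφ (X ω)).symm
end

section
/- (Scaled membership under independent weighting) Let $W$ be a random element of $\mathcal{W}$ with the same distribution as a reference element, let $X\ge 0$ be a nonnegative random variable independent of $W$ with finite mean, let $g:\mathcal{W}\times\mathcal{A}\to\mathbb{R}^m$ be bounded measurable, let $\Gamma=\{\mathbb{E}[g(W,\alpha(W,U))]:\alpha\text{ measurable},\ U\sim\mathrm{Unif}[0,1]\text{ independent of }W\}$ (a bounded convex set), and let $A$ be any random element of $\mathcal{A}$ (possibly dependent on $(W,X)$), where $\mathcal{A}$ is a standard Borel space. Then $\mathbb{E}[X\, g(W,A)]\in \mathbb{E}[X]\,\overline{\Gamma}$, where $\mathbb{E}[X]\Gamma$ denotes Minkowski scaling. -/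
open MeasureTheory ProbabilityTheory Pointwise

open scoped ENNReal

/-!
Tilt `P` by the density `X`: under `Q = X • P` the law of `W` is `E[X]` times its law under `P`,
because `X` is independent of `W`. Disintegrating the `Q`-law of `(W, A)` over `W` and realising
the conditional kernel as the image of the uniform law on `[0, 1]` yields a policy `α`; then
`E[X g(W, A)] = E[X] E[g(W, α(W, V))]` with `E[g(W, α(W, V))] ∈ Γ`, since `V` is uniform and
independent of `W`.
-/

lemma ProbabilityTheory.Kernel.exists_measurable_map_restrict_Icc_eq {X Y : Type*}
    [MeasurableSpace X] [MeasurableSpace Y] [StandardBorelSpace Y] [Nonempty Y]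
    (κ : Kernel X Y) [IsMarkovKernel κ] :
    ∃ α : X → ℝ → Y, Measurable (Function.uncurry α) ∧
      ∀ x, (volume.restrict (Set.Icc (0 : ℝ) 1)).map (α x) = κ x := by
  obtain ⟨f, hf, hfκ⟩ := κ.exists_measurable_map_eq_unitInterval
  have hproj : Measurable (Set.projIcc (0 : ℝ) 1 zero_le_one) := continuous_projIcc.measurable
  refine ⟨fun x => f x ∘ Set.projIcc 0 1 zero_le_one,
    hf.comp (measurable_fst.prodMk (hproj.comp measurable_snd)), fun x => ?_⟩
  dsimp only
  rw [← hfκ x, ← unitInterval.measurePreserving_coe.map_eq,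
    Measure.map_map (hf.of_uncurry_left.comp hproj) measurable_subtype_coe]
  congr 1
  funext u
  simp only [Function.comp_apply, Set.projIcc_val]

lemma ProbabilityTheory.IndepFun.map_withDensity_eq_smul {Ω β : Type*} [MeasurableSpace Ω]
    [MeasurableSpace β] {P : Measure Ω} {D : Ω → ℝ≥0∞} {W : Ω → β}
    (h : IndepFun D W P) (hD : Measurable D) (hW : Measurable W) :
    (P.withDensity D).map W = (∫⁻ ω, D ω ∂P) • P.map W := by
  ext s hs
  have hind : IndepFun D ((W ⁻¹' s).indicator 1) P :=
    h.comp (φ := id) measurable_id ((measurable_const (a := (1 : ℝ≥0∞))).indicator hs)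
  rw [Measure.map_apply hW hs, withDensity_apply _ (hW hs), Measure.smul_apply,
    Measure.map_apply hW hs, smul_eq_mul, ← lintegral_indicator_one (hW hs),
    ← lintegral_indicator (hW hs), ← lintegral_mul_eq_lintegral_mul_lintegral_of_indepFun hD
      (measurable_one.indicator (hW hs)) hind]
  congr 1
  funext ω
  by_cases hω : W ω ∈ s <;> simp [hω]

lemma ProbabilityTheory.IndepFun.integral_comp_eq_integral_integral {Ω β γ E : Type*}
    [MeasurableSpace Ω] [MeasurableSpace β] [MeasurableSpace γ] [NormedAddCommGroup E]
    [NormedSpace ℝ E] {P : Measure Ω} [IsFiniteMeasure P] {W : Ω → β} {V : Ω → γ}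
    {F : β → γ → E} (h : IndepFun W V P) (hW : Measurable W) (hV : Measurable V)
    (hF : Integrable (Function.uncurry F) ((P.map W).prod (P.map V))) :
    ∫ ω, F (W ω) (V ω) ∂P = ∫ w, ∫ v, F w v ∂(P.map V) ∂(P.map W) := by
  have hmap := h.map_prod_eq_prod_map_map hW.aemeasurable hV.aemeasurable
  calc ∫ ω, F (W ω) (V ω) ∂P
        = ∫ p, Function.uncurry F p ∂(P.map fun ω => (W ω, V ω)) :=
      (integral_map (hW.prodMk hV).aemeasurable (hmap ▸ hF.aestronglyMeasurable)).symm
    _ = _ := by rw [hmap, integral_prod _ hF]; rfl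

lemma MeasureTheory.Measure.integral_eq_integral_integral_of_map_eq_condKernel
    {β Y E : Type*} [MeasurableSpace β] [MeasurableSpace Y] [StandardBorelSpace Y]
    [Nonempty Y] [NormedAddCommGroup E] [NormedSpace ℝ E]
    {ρ : Measure (β × Y)} [IsFiniteMeasure ρ] {ν : Measure ℝ} {α : β → ℝ → Y}
    (hα : Measurable (Function.uncurry α)) (hακ : ∀ b, ν.map (α b) = ρ.condKernel b)
    {F : β → Y → E}
    (hF : StronglyMeasurable (Function.uncurry F)) (hFρ : Integrable (Function.uncurry F) ρ) :
    ∫ p, F p.1 p.2 ∂ρ = ∫ b, ∫ u, F b (α b u) ∂ν ∂ρ.fst := by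
  have hsample (b : β) : ∫ y, F b y ∂ρ.condKernel b = ∫ u, F b (α b u) ∂ν := by
    rw [← hακ b, integral_map hα.of_uncurry_left.aemeasurable
      hF.of_uncurry_left.aestronglyMeasurable]
  simp only [← hsample]
  exact (ρ.integral_condKernel hFρ).symm

/-- Scaled membership under independent weighting:
`E[X g(W,A)] ∈ E[X] · closure Γ`, where `Γ` is the achievable set of
expectations `E[g(W, α(W,U))]` over measurable policies with `U` uniform and
independent of `W`. -/
theorem stmt19 {Ω 𝒲 𝒜 : Type*} [MeasurableSpace Ω] [MeasurableSpace 𝒲]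
    [MeasurableSpace 𝒜] [StandardBorelSpace 𝒜]
    (P : Measure Ω) [IsProbabilityMeasure P]
    (W : Ω → 𝒲) (hW : Measurable W)
    (X : Ω → ℝ) (hX : Measurable X) (hX0 : ∀ ω, 0 ≤ X ω) (hXint : Integrable X P)
    (hindep : IndepFun X W P)
    (m : ℕ) (g : 𝒲 → 𝒜 → EuclideanSpace ℝ (Fin m))
    (hg : Measurable (Function.uncurry g)) (Cb : ℝ) (hgb : ∀ w a, ‖g w a‖ ≤ Cb)
    (A : Ω → 𝒜) (hA : Measurable A)
    (V : Ω → ℝ) (hV : Measurable V)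
    (hVunif : Measure.map V P = volume.restrict (Set.Icc (0 : ℝ) 1))
    (hVindep : IndepFun (fun ω => (W ω, X ω, A ω)) V P) :
    let Γ : Set (EuclideanSpace ℝ (Fin m)) :=
      {x | ∃ (α : 𝒲 → ℝ → 𝒜) (U : Ω → ℝ),
        Measurable (Function.uncurry α) ∧ Measurable U ∧
        Measure.map U P = volume.restrict (Set.Icc (0 : ℝ) 1) ∧
        IndepFun U W P ∧
        x = ∫ ω, g (W ω) (α (W ω) (U ω)) ∂P}
    (∫ ω, X ω • g (W ω) (A ω) ∂P) ∈ (∫ ω, X ω ∂P) • closure Γ := by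
  intro Γ
  obtain ⟨ω₀⟩ := nonempty_of_isProbabilityMeasure P
  have : Nonempty 𝒜 := ⟨A ω₀⟩
  set ν := volume.restrict (Set.Icc (0 : ℝ) 1)
  set Q := P.withDensity fun ω => ENNReal.ofReal (X ω)
  have : IsFiniteMeasure Q := isFiniteMeasure_withDensity_ofReal hXint.2
  set ρ := Q.map fun ω => (W ω, A ω)
  obtain ⟨α, hα, hακ⟩ := ρ.condKernel.exists_measurable_map_restrict_Icc_eq
  have hWV : IndepFun W V P := hVindep.comp measurable_fst measurable_id
  have hg_int : Integrable (Function.uncurry g) ρ :=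
    .of_bound hg.aestronglyMeasurable Cb (.of_forall fun p => hgb p.1 p.2)
  have hgα_int : Integrable (fun p : 𝒲 × ℝ => g p.1 (α p.1 p.2)) ((P.map W).prod ν) :=
    .of_bound (hg.comp (measurable_fst.prodMk hα)).aestronglyMeasurable Cb
      (.of_forall fun p => hgb _ _)
  have hρ_fst : ρ.fst = ENNReal.ofReal (∫ ω, X ω ∂P) • P.map W := by
    rw [Measure.fst_map_prodMk hA, ofReal_integral_eq_lintegral_ofReal hXint (.of_forall hX0)]
    exact (hindep.comp ENNReal.measurable_ofReal measurable_id).map_withDensity_eq_smul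
      hX.ennreal_ofReal hW
  have key : ∫ ω, X ω • g (W ω) (A ω) ∂P
      = (∫ ω, X ω ∂P) • ∫ ω, g (W ω) (α (W ω) (V ω)) ∂P := calc
    _ = ∫ ω, g (W ω) (A ω) ∂Q := by
      rw [integral_withDensity_eq_integral_toReal_smul hX.ennreal_ofReal
        (.of_forall fun _ => ENNReal.ofReal_lt_top)]
      simp only [ENNReal.toReal_ofReal (hX0 _)]
    _ = ∫ p, g p.1 p.2 ∂ρ :=
      (integral_map (hW.prodMk hA).aemeasurable hg.aestronglyMeasurable).symm
    _ = ∫ w, ∫ u, g w (α w u) ∂ν ∂ρ.fst :=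
      ρ.integral_eq_integral_integral_of_map_eq_condKernel hα hακ hg.stronglyMeasurable hg_int
    _ = _ := by
      rw [hρ_fst, integral_smul_measure, ENNReal.toReal_ofReal (integral_nonneg hX0),
        hWV.integral_comp_eq_integral_integral (F := fun w u => g w (α w u)) hW hV
          (hVunif ▸ hgα_int), hVunif]
  rw [key]
  exact Set.smul_mem_smul_set (subset_closure ⟨α, V, hα, hV, hVunif, hWV.symm, rfl⟩)
end
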